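/- arXiv:2604.01026 — 2 statements merged into one kernel-verified Lean document; each statement's English description precedes it below -/
import Mathlib

section
/- Let A_1, ..., A_N be skew-adjoint matrices with ‖A_j‖ = a_j, and suppose the splitting method Ψ(h) = ∏_{j=1}^{s} e^{h α_N^{(j)} A_N}···e^{h α_1^{(j)} A_1} with real coefficients α_i^{(j)} approximates e^{h(A_1+···+A_N)} to order p, i.e., ‖Ψ(h) − e^{h(A_1+···+A_N)}‖ = O(h^{p+1}) with vanishing Taylor coefficients up to order p. Then for all h ≥ 0, ‖Ψ(h) − e^{hΣA_j}‖ ≤ h^{p+1}/(p+1)! · ((Σ_i a_i)^{p+1} + (Σ_i a_i (|α_i^{(1)}|+···+|α_i^{(s)}|))^{p+1}). -/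
open scoped Matrix Matrix.Norms.L2Operator ContDiff Nat
open NormedSpace

/-!
Since `Ψ(h) - exp(h • ∑ Aᵢ)` vanishes to order `p` at `0`, integrating `p + 1` times bounds it
by `h ^ (p + 1) / (p + 1)!` times a bound for its `(p + 1)`-st derivative. For skew-adjoint `M`
the factor `exp(t • M)` is unitary, so the `m`-th derivative `M ^ m * exp(t • M)` has norm at most
`‖M‖ ^ m`; by the Leibniz rule, a product of functions whose `m`-th derivatives are bounded by
`cₖ ^ m` has `m`-th derivatives bounded by `(∑ cₖ) ^ m`.
-/

section Taylor

variable {E : Type*} [NormedAddCommGroup E] [NormedSpace ℝ E]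

theorem norm_le_mul_pow_succ_div_factorial_of_norm_deriv_le {f : ℝ → E} {C : ℝ} {k : ℕ}
    (hf : Differentiable ℝ f) (h0 : f 0 = 0)
    (hf' : ∀ t, 0 ≤ t → ‖deriv f t‖ ≤ C * t ^ k / k !) {t : ℝ} (ht : 0 ≤ t) :
    ‖f t‖ ≤ C * t ^ (k + 1) / (k + 1)! := by
  have hB : ∀ x : ℝ, HasDerivAt (fun x : ℝ => C * x ^ (k + 1) / (k + 1)!) (C * x ^ k / k !) x := by
    intro x
    refine (((hasDerivAt_pow (k + 1) x).const_mul C).div_const _).congr_deriv ?_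
    rw [Nat.add_sub_cancel, Nat.factorial_succ]
    push_cast
    field_simp
  exact image_norm_le_of_norm_deriv_right_le_deriv_boundary hf.continuous.continuousOn
    (fun x _ => (hf x).hasDerivAt.hasDerivWithinAt) (by simp [h0]) hB
    (fun x hx => hf' x hx.1) (Set.right_mem_Icc.mpr ht)

theorem norm_le_mul_pow_succ_div_factorial_of_iteratedDeriv_eq_zero {f : ℝ → E} {C : ℝ} {p : ℕ}
    (hf : ContDiff ℝ (p + 1) f) (h0 : ∀ k ≤ p, iteratedDeriv k f 0 = 0)
    (hC : ∀ t, 0 ≤ t → ‖iteratedDeriv (p + 1) f t‖ ≤ C) {t : ℝ} (ht : 0 ≤ t) :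
    ‖f t‖ ≤ C * t ^ (p + 1) / (p + 1)! := by
  induction p generalizing f t with
  | zero =>
    refine norm_le_mul_pow_succ_div_factorial_of_norm_deriv_le (hf.differentiable (by simp))
      (by simpa using h0 0 le_rfl) (fun t ht => ?_) ht
    simpa [iteratedDeriv_one] using hC t ht
  | succ p ih =>
    refine norm_le_mul_pow_succ_div_factorial_of_norm_deriv_le (hf.differentiable (by simp))
      (by simpa using h0 0 (by omega)) (fun t ht => ih ?_ (fun k hk => ?_) (fun t ht => ?_) ht) ht
    · exact hf.deriv'
    · rw [← iteratedDeriv_succ']; exact h0 (k + 1) (by omega)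
    · rw [← iteratedDeriv_succ']; exact hC t ht

end Taylor

section DerivBound

variable {𝔸 : Type*} [NormedRing 𝔸] [NormedAlgebra ℝ 𝔸]

def HasIteratedDerivPowBound (c : ℝ) (f : ℝ → 𝔸) : Prop :=
  ContDiff ℝ ∞ f ∧ ∀ (m : ℕ) (x : ℝ), ‖iteratedDeriv m f x‖ ≤ c ^ m

namespace HasIteratedDerivPowBound

theorem mono {c d : ℝ} {f : ℝ → 𝔸} (hf : HasIteratedDerivPowBound c f) (hc : 0 ≤ c)
    (hcd : c ≤ d) : HasIteratedDerivPowBound d f :=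
  ⟨hf.1, fun m x => (hf.2 m x).trans (pow_le_pow_left₀ hc hcd m)⟩

theorem mul {c d : ℝ} {f g : ℝ → 𝔸} (hf : HasIteratedDerivPowBound c f)
    (hg : HasIteratedDerivPowBound d g) :
    HasIteratedDerivPowBound (c + d) (fun x => f x * g x) := by
  refine ⟨hf.1.mul hg.1, fun m x => ?_⟩
  rw [← norm_iteratedFDeriv_eq_norm_iteratedDeriv, add_pow]
  refine (norm_iteratedFDeriv_mul_le hf.1 hg.1 x (by exact_mod_cast le_top)).trans
    (Finset.sum_le_sum fun i _ => ?_)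
  simp only [norm_iteratedFDeriv_eq_norm_iteratedDeriv]
  have hfi := hf.2 i x
  have hgi := hg.2 (m - i) x
  calc (m.choose i : ℝ) * ‖iteratedDeriv i f x‖ * ‖iteratedDeriv (m - i) g x‖
      ≤ m.choose i * c ^ i * d ^ (m - i) := by
        gcongr
        exact mul_nonneg (Nat.cast_nonneg _) ((norm_nonneg _).trans hfi)
    _ = c ^ i * d ^ (m - i) * m.choose i := by ring

theorem norm_iteratedDeriv_sub_le {c d : ℝ} {f g : ℝ → 𝔸} (hf : HasIteratedDerivPowBound c f)
    (hg : HasIteratedDerivPowBound d g) (m : ℕ) (x : ℝ) :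
    ‖iteratedDeriv m (fun t => f t - g t) x‖ ≤ c ^ m + d ^ m := by
  rw [iteratedDeriv_fun_sub (hf.1.of_le (by exact_mod_cast le_top)).contDiffAt
    (hg.1.of_le (by exact_mod_cast le_top)).contDiffAt]
  exact (norm_sub_le _ _).trans (add_le_add (hf.2 m x) (hg.2 m x))

theorem one (h1 : ‖(1 : 𝔸)‖ ≤ 1) : HasIteratedDerivPowBound 0 (fun _ => (1 : 𝔸)) := by
  refine ⟨contDiff_const, fun m x => ?_⟩
  rcases m with _ | m <;> simp [iteratedDeriv_const, h1]

theorem list_prod {ι : Type*} (h1 : ‖(1 : 𝔸)‖ ≤ 1) {c : ι → ℝ} {f : ι → ℝ → 𝔸} {l : List ι}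
    (h : ∀ i ∈ l, HasIteratedDerivPowBound (c i) (f i)) :
    HasIteratedDerivPowBound (l.map c).sum (fun t => (l.map (f · t)).prod) := by
  induction l with
  | nil => simpa using one h1
  | cons i l ih =>
    simpa using (h i List.mem_cons_self).mul (ih fun j hj => h j (List.mem_cons_of_mem i hj))

theorem ofFn_reverse_prod {k : ℕ} (h1 : ‖(1 : 𝔸)‖ ≤ 1) {c : Fin k → ℝ} {f : Fin k → ℝ → 𝔸}
    (h : ∀ i, HasIteratedDerivPowBound (c i) (f i)) :
    HasIteratedDerivPowBound (∑ i, c i) (fun t => (List.ofFn (f · t)).reverse.prod) := by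
  simpa [List.map_reverse, List.map_ofFn, Function.comp_def, List.sum_reverse, List.sum_ofFn]
    using list_prod h1 (l := (List.ofFn id).reverse) fun i _ => h i

end HasIteratedDerivPowBound

end DerivBound

section CStarRing

variable {𝔸 : Type*} [NormedRing 𝔸] [StarRing 𝔸] [CStarRing 𝔸]

theorem CStarRing.norm_one_le : ‖(1 : 𝔸)‖ ≤ 1 := by
  rcases subsingleton_or_nontrivial 𝔸 with h | h
  · simp [Subsingleton.elim (1 : 𝔸) 0]
  · exact CStarRing.norm_one.le

theorem CStarRing.norm_pow_le (x : 𝔸) (m : ℕ) : ‖x ^ m‖ ≤ ‖x‖ ^ m := by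
  rcases m with _ | m
  · simpa using norm_one_le
  · exact norm_pow_le' x m.succ_pos

end CStarRing

section Exp

variable {𝔸 : Type*} [NormedRing 𝔸] [NormedAlgebra ℝ 𝔸] [CompleteSpace 𝔸]

theorem contDiff_exp_smul (M : 𝔸) : ContDiff ℝ ∞ (fun t : ℝ => exp (t • M)) :=
  (contDiff_iff_contDiffAt.mpr fun x => (exp_analytic (𝕂 := ℝ) x).contDiffAt).comp
    (contDiff_id.smul contDiff_const)

theorem iteratedDeriv_exp_smul (M : 𝔸) (m : ℕ) :
    iteratedDeriv m (fun t : ℝ => exp (t • M)) = fun t => M ^ m * exp (t • M) := by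
  induction m with
  | zero => simp
  | succ m ih =>
    ext t
    rw [iteratedDeriv_succ, ih, ((hasDerivAt_exp_smul_const' M t).const_mul (M ^ m)).deriv,
      ← mul_assoc, ← pow_succ]

theorem hasIteratedDerivPowBound_exp_smul [StarRing 𝔸] [CStarRing 𝔸] [StarModule ℝ 𝔸] {M : 𝔸}
    (hM : M ∈ skewAdjoint 𝔸) : HasIteratedDerivPowBound ‖M‖ (fun t : ℝ => exp (t • M)) := by
  refine ⟨contDiff_exp_smul M, fun m x => ?_⟩
  let +nondep : NormedAlgebra ℚ 𝔸 := .restrictScalars ℚ ℝ 𝔸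
  rw [iteratedDeriv_exp_smul, CStarRing.norm_mul_mem_unitary _
    (exp_mem_unitary_of_mem_skewAdjoint (skewAdjoint.smul_mem x hM))]
  exact CStarRing.norm_pow_le M m

end Exp

/-- Local error bound for a general splitting method of order p,
in terms of the norms of the operators. -/
theorem general_splitting_local_error_bound {n N s p : ℕ}
    (A : Fin N → Matrix (Fin n) (Fin n) ℂ)
    (a : Fin N → ℝ) (ha : ∀ i, ‖A i‖ = a i)
    (hskew : ∀ i, (A i)ᴴ = -(A i))
    (α : Fin N → Fin s → ℝ)
    (Ψ : ℝ → Matrix (Fin n) (Fin n) ℂ)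
    (hΨ : ∀ h : ℝ, Ψ h =
      (List.ofFn fun j : Fin s =>
        (List.ofFn fun i : Fin N => exp ((h * α i j) • A i)).reverse.prod).reverse.prod)
    (horder : ∀ k ≤ p,
      iteratedDeriv k (fun h : ℝ => Ψ h - exp (h • ∑ i, A i)) 0 = 0) :
    ∀ h : ℝ, 0 ≤ h →
      ‖Ψ h - exp (h • ∑ i, A i)‖ ≤
        h ^ (p + 1) / (p + 1).factorial *
          ((∑ i, a i) ^ (p + 1) + (∑ i, a i * ∑ j, |α i j|) ^ (p + 1)) := by
  intro h hh
  have hskewAdj (i : Fin N) : A i ∈ skewAdjoint (Matrix (Fin n) (Fin n) ℂ) :=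
    skewAdjoint.mem_iff.mpr (hskew i)
  have hexp : HasIteratedDerivPowBound (∑ i, a i) (fun t : ℝ => exp (t • ∑ i, A i)) :=
    (hasIteratedDerivPowBound_exp_smul (sum_mem fun i _ => hskewAdj i)).mono (norm_nonneg _)
      ((norm_sum_le _ _).trans_eq (Finset.sum_congr rfl fun i _ => ha i))
  have hsplit : HasIteratedDerivPowBound (∑ i, a i * ∑ j, |α i j|) Ψ := by
    have hfactor (i : Fin N) (j : Fin s) :
        HasIteratedDerivPowBound (|α i j| * a i) (fun t : ℝ => exp ((t * α i j) • A i)) := by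
      simpa [mul_smul, norm_smul, ha] using
        hasIteratedDerivPowBound_exp_smul (skewAdjoint.smul_mem (α i j) (hskewAdj i))
    have hprod := HasIteratedDerivPowBound.ofFn_reverse_prod CStarRing.norm_one_le fun j =>
      HasIteratedDerivPowBound.ofFn_reverse_prod CStarRing.norm_one_le fun i => hfactor i j
    rw [funext hΨ]
    convert hprod using 1
    rw [Finset.sum_comm]
    simp [Finset.mul_sum, mul_comm]
  calc ‖Ψ h - exp (h • ∑ i, A i)‖
      ≤ ((∑ i, a i * ∑ j, |α i j|) ^ (p + 1) + (∑ i, a i) ^ (p + 1)) * h ^ (p + 1) / (p + 1)! :=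
        norm_le_mul_pow_succ_div_factorial_of_iteratedDeriv_eq_zero
          ((hsplit.1.sub hexp.1).of_le (by exact_mod_cast le_top)) horder
          (fun t _ => hsplit.norm_iteratedDeriv_sub_le hexp (p + 1) t) hh
    _ = _ := by ring
end

section
/- For skew-adjoint matrices A_1, ..., A_N and h ≥ 0, the Lie–Trotter formula satisfies ‖e^{hA_1}···e^{hA_N} − e^{h(A_1+···+A_N)}‖ ≤ (h²/2) Σ_{k=2}^{N} ‖ Σ_{j=1}^{k−1} [A_k, A_j] ‖. -/
/-!
Along the path `s ↦ exp (s a) exp (s b) exp ((t - s)(a + b))` from `exp (t (a + b))` to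
`exp (t a) exp (t b)`, the derivative is `exp (s a) [a, exp (s b)] exp ((t - s)(a + b))`.
For skew-adjoint `a, b` the outer factors are unitary, and `‖[a, exp (s b)]‖ ≤ s ‖[b, a]‖` by the
same argument applied to `s ↦ exp (s b) a exp ((t - s) b)`; integrating `s` over `[0, t]` gives
the two-factor bound `t² / 2 ‖[b, a]‖`. The `N`-factor bound follows by induction on `N`: the
last factor `exp (t A_N)` is unitary, so it does not amplify the error already made, and merging
it into `exp (t (A_1 + ⋯ + A_{N-1}))` costs `t² / 2 ‖[A_N, A_1 + ⋯ + A_{N-1}]‖`.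
-/

open scoped Matrix Matrix.Norms.L2Operator
open NormedSpace

theorem norm_sub_le_of_norm_deriv_le_mul {E : Type*} [NormedAddCommGroup E] [NormedSpace ℝ E]
    {f f' : ℝ → E} {C t : ℝ} (hf : ∀ s, HasDerivAt f (f' s) s)
    (bound : ∀ s ∈ Set.Ico 0 t, ‖f' s‖ ≤ C * s) (ht : 0 ≤ t) :
    ‖f t - f 0‖ ≤ t ^ 2 / 2 * C := by
  have hB : ∀ s, HasDerivAt (fun s : ℝ => s ^ 2 / 2 * C) (C * s) s := fun s => by
    refine (((hasDerivAt_pow 2 s).div_const 2).mul_const C).congr_deriv ?_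
    push_cast
    ring
  exact image_norm_le_of_norm_deriv_right_le_deriv_boundary (f := fun s => f s - f 0)
    (fun s _ => ((hf s).sub_const _).continuousAt.continuousWithinAt)
    (fun s _ => ((hf s).sub_const _).hasDerivWithinAt) (by simp) hB bound ⟨ht, le_rfl⟩

section CStarRing

variable {𝔸 : Type*} [NormedRing 𝔸] [NormedAlgebra ℝ 𝔸] [CompleteSpace 𝔸]

theorem hasDerivAt_exp_sub_smul (x : 𝔸) (t s : ℝ) :
    HasDerivAt (fun u : ℝ => exp ((t - u) • x)) (-(x * exp ((t - s) • x))) s := by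
  simpa [Function.comp_def] using
    (hasDerivAt_exp_smul_const' x (t - s)).scomp s ((hasDerivAt_id s).const_sub t)

variable [StarRing 𝔸] [CStarRing 𝔸] [StarModule ℝ 𝔸]

theorem exp_smul_mem_unitary {x : 𝔸} (hx : x ∈ skewAdjoint 𝔸) (t : ℝ) :
    exp (t • x) ∈ unitary 𝔸 :=
  letI : NormedAlgebra ℚ 𝔸 := .restrictScalars ℚ ℝ 𝔸
  exp_mem_unitary_of_mem_skewAdjoint (skewAdjoint.smul_mem t hx)

theorem norm_exp_smul_mul_sub_mul_exp_smul_le {a : 𝔸} (ha : a ∈ skewAdjoint 𝔸) (b : 𝔸) {t : ℝ}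
    (ht : 0 ≤ t) : ‖exp (t • a) * b - b * exp (t • a)‖ ≤ t * ‖a * b - b * a‖ := by
  have hg : ∀ s, HasDerivAt (fun s : ℝ => exp (s • a) * b * exp ((t - s) • a))
      (exp (s • a) * (a * b - b * a) * exp ((t - s) • a)) s := fun s =>
    (((hasDerivAt_exp_smul_const a s).mul_const b).mul (hasDerivAt_exp_sub_smul a t s)).congr_deriv
      (by generalize exp (s • a) = x; generalize exp ((t - s) • a) = y; noncomm_ring)
  have key := norm_image_sub_le_of_norm_deriv_le_segment' (fun s _ => (hg s).hasDerivWithinAt)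
    (fun s _ => by
      rw [CStarRing.norm_mul_mem_unitary _ (exp_smul_mem_unitary ha _),
        CStarRing.norm_mem_unitary_mul _ (exp_smul_mem_unitary ha _)]) t ⟨ht, le_rfl⟩
  simpa [mul_comm t] using key

theorem norm_exp_smul_mul_exp_smul_sub_exp_smul_add_le {a b : 𝔸} (ha : a ∈ skewAdjoint 𝔸)
    (hb : b ∈ skewAdjoint 𝔸) {t : ℝ} (ht : 0 ≤ t) :
    ‖exp (t • a) * exp (t • b) - exp (t • (a + b))‖ ≤ t ^ 2 / 2 * ‖b * a - a * b‖ := by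
  have hΦ : ∀ s, HasDerivAt (fun s : ℝ => exp (s • a) * exp (s • b) * exp ((t - s) • (a + b)))
      (exp (s • a) * (a * exp (s • b) - exp (s • b) * a) * exp ((t - s) • (a + b))) s :=
    fun s => (((hasDerivAt_exp_smul_const a s).mul (hasDerivAt_exp_smul_const b s)).mul
        (hasDerivAt_exp_sub_smul (a + b) t s)).congr_deriv (by
      simp only [Pi.mul_apply]
      generalize exp (s • a) = x; generalize exp (s • b) = y
      generalize exp ((t - s) • (a + b)) = z
      noncomm_ring)
  have key := norm_sub_le_of_norm_deriv_le_mul hΦ (fun s hs => by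
    rw [CStarRing.norm_mul_mem_unitary _ (exp_smul_mem_unitary (add_mem ha hb) _),
      CStarRing.norm_mem_unitary_mul _ (exp_smul_mem_unitary ha _), norm_sub_rev, mul_comm]
    exact norm_exp_smul_mul_sub_mul_exp_smul_le hb a hs.1) ht
  simpa using key

theorem norm_prod_exp_smul_sub_exp_smul_sum_le (A : ℕ → 𝔸) (hA : ∀ j, A j ∈ skewAdjoint 𝔸)
    (N : ℕ) {t : ℝ} (ht : 0 ≤ t) :
    ‖(List.ofFn fun i : Fin N => exp (t • A ((i : ℕ) + 1))).prod -
        exp (t • ∑ j ∈ Finset.Icc 1 N, A j)‖ ≤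
      t ^ 2 / 2 * ∑ k ∈ Finset.Icc 2 N,
        ‖∑ j ∈ Finset.Icc 1 (k - 1), (A k * A j - A j * A k)‖ := by
  set c : ℕ → ℝ := fun k => ‖∑ j ∈ Finset.Icc 1 (k - 1), (A k * A j - A j * A k)‖
  -- `c 1` is an empty sum, so the `k`-sum may start at `1`
  have hc : ∀ N, ∑ k ∈ Finset.Icc 2 N, c k = ∑ k ∈ Finset.Icc 1 N, c k := fun N =>
    Finset.sum_subset (Finset.Icc_subset_Icc_left one_le_two) fun k hk hk' => by
      obtain rfl : k = 1 := by simp only [Finset.mem_Icc] at hk hk'; omega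
      simp [c]
  simp only [hc]
  induction N with
  | zero => simp
  | succ N ih =>
    set S := ∑ j ∈ Finset.Icc 1 N, A j
    set P := (List.ofFn fun i : Fin N => exp (t • A ((i : ℕ) + 1))).prod
    set a := A (N + 1)
    have hP : (List.ofFn fun i : Fin (N + 1) => exp (t • A ((i : ℕ) + 1))).prod =
        P * exp (t • a) := by
      rw [List.ofFn_succ', List.prod_concat]
      rfl
    have hS : ∑ j ∈ Finset.Icc 1 (N + 1), A j = S + a := Finset.sum_Icc_succ_top (by omega) _
    have hc_succ : c (N + 1) = ‖a * S - S * a‖ := by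
      simp [c, a, S, Finset.mul_sum, Finset.sum_mul]
    rw [hP, hS]
    calc ‖P * exp (t • a) - exp (t • (S + a))‖
        = ‖(P - exp (t • S)) * exp (t • a) + (exp (t • S) * exp (t • a) - exp (t • (S + a)))‖ := by
          congr 1; noncomm_ring
      _ ≤ ‖P - exp (t • S)‖ + t ^ 2 / 2 * ‖a * S - S * a‖ := by
          refine (norm_add_le _ _).trans (add_le_add ?_ ?_)
          · rw [CStarRing.norm_mul_mem_unitary _ (exp_smul_mem_unitary (hA _) _)]
          · exact norm_exp_smul_mul_exp_smul_sub_exp_smul_add_le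
              (sum_mem fun j _ => hA j) (hA _) ht
      _ ≤ t ^ 2 / 2 * ∑ k ∈ Finset.Icc 1 (N + 1), c k := by
          rw [Finset.sum_Icc_succ_top (by omega), mul_add, hc_succ]
          gcongr

end CStarRing

/-- Commutator bound for the Lie–Trotter splitting with N operators. -/
theorem lie_trotter_commutator_bound {n N : ℕ}
    (A : ℕ → Matrix (Fin n) (Fin n) ℂ)
    (hskew : ∀ j, (A j)ᴴ = -(A j)) (h : ℝ) (hh : 0 ≤ h) :
    ‖(List.ofFn fun i : Fin N => exp (h • A ((i : ℕ) + 1))).prod -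
        exp (h • ∑ j ∈ Finset.Icc 1 N, A j)‖ ≤
      h ^ 2 / 2 * ∑ k ∈ Finset.Icc 2 N,
        ‖∑ j ∈ Finset.Icc 1 (k - 1), (A k * A j - A j * A k)‖ :=
  norm_prod_exp_smul_sub_exp_smul_sum_le A (fun j => skewAdjoint.mem_iff.2 (hskew j)) N hh
end
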